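/- Let n ≥ 2, let a_1, …, a_n be distinct complex numbers, let Y be a real number with Im a_j ≠ Y for all j, and let p be a complex polynomial with deg p ≤ n − 2. Then the integral over ℝ of x ↦ p(x+iY) / ∏_{j=1}^n (x+iY − a_j) equals −2πi · Σ_{j : Im a_j < Y} p(a_j) / ∏_{k ≠ j} (a_j − a_k). -/

import Mathlib

open MeasureTheory Filter Finset

open Polynomial Topology


lemma jk_poly_decomp {n : ℕ} (a : Fin n → ℂ) (ha : Function.Injective a)
    (p : Polynomial ℂ) (hp : p.natDegree < n) :
    p = ∑ j, Polynomial.C (p.eval (a j) / ∏ k ∈ Finset.univ.erase j, (a j - a k)) *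
      ∏ k ∈ Finset.univ.erase j, (Polynomial.X - Polynomial.C (a k)) := by
  have hprod : ∀ j : Fin n, (∏ k ∈ Finset.univ.erase j, (a j - a k)) ≠ 0 := by
    intro j
    rw [Finset.prod_ne_zero_iff]
    intro k hk
    exact sub_ne_zero.2 (fun h => (Finset.mem_erase.1 hk).1 ((ha h).symm))
  have hM : ∀ j : Fin n, (∏ k ∈ Finset.univ.erase j, (X - Polynomial.C (a k))).natDegree = n - 1 := by
    intro j
    rw [Polynomial.natDegree_prod _ _ (fun k _ => X_sub_C_ne_zero (a k))]
    simp [Polynomial.natDegree_X_sub_C, Finset.card_erase_of_mem]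
  set q : Polynomial ℂ := p - ∑ j, Polynomial.C (p.eval (a j) / ∏ k ∈ Finset.univ.erase j, (a j - a k)) *
      ∏ k ∈ Finset.univ.erase j, (X - Polynomial.C (a k)) with hq
  have hqdeg : q.natDegree < n := by
    refine lt_of_le_of_lt (Polynomial.natDegree_sub_le _ _) (max_lt hp ?_)
    refine lt_of_le_of_lt (Polynomial.natDegree_sum_le _ _) ?_
    rw [Finset.fold_max_lt]
    refine ⟨by omega, fun j _ => ?_⟩
    refine lt_of_le_of_lt (Polynomial.natDegree_C_mul_le _ _) ?_
    rw [hM j]; omega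
  have hqeval : ∀ i, q.eval (a i) = 0 := by
    intro i
    rw [hq, Polynomial.eval_sub, Polynomial.eval_finset_sum, sub_eq_zero]
    rw [Finset.sum_eq_single i]
    · simp only [Polynomial.eval_mul, Polynomial.eval_C, Polynomial.eval_prod,
        Polynomial.eval_sub, Polynomial.eval_X]
      exact (div_mul_cancel₀ _ (hprod i)).symm
    · intro j _ hji
      simp only [Polynomial.eval_mul, Polynomial.eval_C, Polynomial.eval_prod,
        Polynomial.eval_sub, Polynomial.eval_X]
      have h0 : (∏ x ∈ Finset.univ.erase j, (a i - a x)) = 0 :=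
        Finset.prod_eq_zero (Finset.mem_erase.2 ⟨Ne.symm hji, Finset.mem_univ i⟩) (sub_self (a i))
      rw [h0, mul_zero]
    · exact fun h => absurd (Finset.mem_univ i) h
  have : q = 0 := by
    refine Polynomial.eq_zero_of_natDegree_lt_card_of_eval_eq_zero q ha hqeval ?_
    simpa using hqdeg
  rw [hq, sub_eq_zero] at this
  exact this

lemma jk_sum_c_zero {n : ℕ} (hn : 2 ≤ n) (a : Fin n → ℂ) (ha : Function.Injective a)
    (p : Polynomial ℂ) (hp : p.natDegree ≤ n - 2) :
    ∑ j, p.eval (a j) / ∏ k ∈ Finset.univ.erase j, (a j - a k) = 0 := by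
  have hdec := jk_poly_decomp a ha p (by omega)
  have hM : ∀ j : Fin n, (∏ k ∈ Finset.univ.erase j, (X - Polynomial.C (a k))).natDegree = n - 1 := by
    intro j
    rw [Polynomial.natDegree_prod _ _ (fun k _ => X_sub_C_ne_zero (a k))]
    simp [Polynomial.natDegree_X_sub_C, Finset.card_erase_of_mem]
  have hmono : ∀ j : Fin n, (∏ k ∈ Finset.univ.erase j, (X - Polynomial.C (a k))).Monic :=
    fun j => monic_prod_of_monic _ _ (fun k _ => monic_X_sub_C (a k))
  have := congrArg (fun r => Polynomial.coeff r (n - 1)) hdec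
  simp only [Polynomial.finset_sum_coeff, Polynomial.coeff_C_mul] at this
  rw [Polynomial.coeff_eq_zero_of_natDegree_lt (by omega)] at this
  rw [this]
  refine Finset.sum_congr rfl (fun j _ => ?_)
  rw [show n - 1 = (∏ k ∈ Finset.univ.erase j, (X - Polynomial.C (a k))).natDegree from (hM j).symm,
    (hmono j).coeff_natDegree, mul_one]

lemma jk_eval_decomp {n : ℕ} (a : Fin n → ℂ) (ha : Function.Injective a)
    (p : Polynomial ℂ) (hp : p.natDegree < n) (z : ℂ) (hz : ∀ j, z ≠ a j) :
    p.eval z / ∏ j, (z - a j) =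
      ∑ j, (p.eval (a j) / ∏ k ∈ Finset.univ.erase j, (a j - a k)) / (z - a j) := by
  have hzne : ∀ j : Fin n, z - a j ≠ 0 := fun j => sub_ne_zero.2 (hz j)
  have heval : p.eval z = ∑ j, (p.eval (a j) / ∏ k ∈ Finset.univ.erase j, (a j - a k)) *
      ∏ k ∈ Finset.univ.erase j, (z - a k) := by
    conv_lhs => rw [jk_poly_decomp a ha p hp]
    rw [Polynomial.eval_finset_sum]
    refine Finset.sum_congr rfl (fun j _ => ?_)
    simp [Polynomial.eval_prod]
  rw [heval, Finset.sum_div]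
  refine Finset.sum_congr rfl (fun j _ => ?_)
  have hsplit : ∏ k, (z - a k) = (z - a j) * ∏ k ∈ Finset.univ.erase j, (z - a k) :=
    (Finset.mul_prod_erase Finset.univ _ (Finset.mem_univ j)).symm
  have hPne : (∏ k ∈ Finset.univ.erase j, (z - a k)) ≠ 0 :=
    Finset.prod_ne_zero_iff.2 (fun k _ => hzne k)
  rw [hsplit, mul_comm (z - a j) _, ← div_div, mul_div_assoc,
    div_self hPne, mul_one]

noncomputable def jkK (c : ℂ) : ℝ := 2 + (1 + 2 * c.re ^ 2) / c.im ^ 2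

lemma jkK_pos (c : ℂ) (hc : c.im ≠ 0) : 0 < jkK c := by
  have : 0 < c.im ^ 2 := by positivity
  have : 0 ≤ (1 + 2 * c.re ^ 2) / c.im ^ 2 := by positivity
  unfold jkK; linarith

lemma jk_abs_sq (c : ℂ) (x : ℝ) :
    ‖(x : ℂ) - c‖ ^ 2 = (x - c.re) ^ 2 + c.im ^ 2 := by
  rw [Complex.sq_norm, Complex.normSq_apply]
  simp [sub_eq_add_neg]
  ring

lemma jk_bound (c : ℂ) (hc : c.im ≠ 0) (x : ℝ) :
    1 + x ^ 2 ≤ jkK c * ‖(x : ℂ) - c‖ ^ 2 := by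
  rw [jk_abs_sq]
  have hb : 0 < c.im ^ 2 := by positivity
  unfold jkK
  have hD0 : 0 ≤ (1 + 2 * c.re ^ 2) / c.im ^ 2 := by positivity
  have h1 : (1 + 2 * c.re ^ 2) ≤ (1 + 2 * c.re ^ 2) / c.im ^ 2 * ((x - c.re) ^ 2 + c.im ^ 2) := by
    have h2 : (1 + 2 * c.re ^ 2) / c.im ^ 2 * c.im ^ 2 = 1 + 2 * c.re ^ 2 :=
      div_mul_cancel₀ _ hb.ne'
    nlinarith [mul_nonneg hD0 (sq_nonneg (x - c.re))]
  nlinarith [sq_nonneg (x - 2 * c.re)]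

lemma jk_ne (c : ℂ) (hc : c.im ≠ 0) (x : ℝ) : (x : ℂ) - c ≠ 0 := by
  intro h
  apply hc
  simpa using congrArg Complex.im h

lemma jk_integrable (a b : ℂ) (ha : a.im ≠ 0) (hb : b.im ≠ 0) :
    MeasureTheory.Integrable (fun x : ℝ => ((x : ℂ) - a)⁻¹ - ((x : ℂ) - b)⁻¹) := by
  have hcont : Continuous (fun x : ℝ => ((x : ℂ) - a)⁻¹ - ((x : ℂ) - b)⁻¹) :=
    ((Complex.continuous_ofReal.sub continuous_const).inv₀ (jk_ne a ha)).sub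
      ((Complex.continuous_ofReal.sub continuous_const).inv₀ (jk_ne b hb))
  set S : ℝ := Real.sqrt (jkK a * jkK b) with hS
  have hS0 : 0 ≤ S := Real.sqrt_nonneg _
  refine MeasureTheory.Integrable.mono'
    ((integrable_inv_one_add_sq).const_mul (‖a - b‖ * S))
    hcont.aestronglyMeasurable (Filter.Eventually.of_forall fun x => ?_)
  have hxa := jk_ne a ha x
  have hxb := jk_ne b hb x
  have hfx : ((x : ℂ) - a)⁻¹ - ((x : ℂ) - b)⁻¹ = (a - b) * (((x : ℂ) - a) * ((x : ℂ) - b))⁻¹ := by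
    field_simp
    ring
  have hDa : 0 < ‖(x : ℂ) - a‖ := by
    simpa [norm_pos_iff] using hxa
  have hDb : 0 < ‖(x : ℂ) - b‖ := by
    simpa [norm_pos_iff] using hxb
  have hx2 : (0:ℝ) < 1 + x ^ 2 := by positivity
  have key : 1 + x ^ 2 ≤ S * (‖(x : ℂ) - a‖ * ‖(x : ℂ) - b‖) := by
    have h1 := jk_bound a ha x
    have h2 := jk_bound b hb x
    have hsq : (1 + x ^ 2) ^ 2 ≤
        (jkK a * jkK b) * (‖(x : ℂ) - a‖ * ‖(x : ℂ) - b‖) ^ 2 := by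
      have := mul_le_mul h1 h2 (le_of_lt hx2)
        (mul_nonneg (jkK_pos a ha).le (sq_nonneg _))
      calc (1 + x^2)^2 = (1+x^2)*(1+x^2) := by ring
        _ ≤ _ := this
        _ = _ := by ring
    calc 1 + x ^ 2 = Real.sqrt ((1 + x ^ 2) ^ 2) := by
          rw [Real.sqrt_sq hx2.le]
      _ ≤ Real.sqrt ((jkK a * jkK b) * (‖(x : ℂ) - a‖ * ‖(x : ℂ) - b‖) ^ 2) :=
          Real.sqrt_le_sqrt hsq
      _ = S * (‖(x : ℂ) - a‖ * ‖(x : ℂ) - b‖) := by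
          rw [Real.sqrt_mul (mul_pos (jkK_pos a ha) (jkK_pos b hb)).le,
            Real.sqrt_sq (by positivity)]
  have hD : 0 < ‖(x : ℂ) - a‖ * ‖(x : ℂ) - b‖ := mul_pos hDa hDb
  rw [hfx, norm_mul, norm_inv, norm_mul,
    ← div_eq_mul_inv, div_le_iff₀ hD]
  have hrhs : ‖a - b‖ * S * (1 + x ^ 2)⁻¹ *
      (‖(x : ℂ) - a‖ * ‖(x : ℂ) - b‖) =
      ‖a - b‖ * (S * (‖(x : ℂ) - a‖ * ‖(x : ℂ) - b‖)) /
        (1 + x ^ 2) := by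
    field_simp
  rw [hrhs, le_div_iff₀ hx2]
  exact mul_le_mul_of_nonneg_left key (norm_nonneg _)

noncomputable def jkS (c : ℂ) : ℂ := if 0 < c.im then 1 else -1

lemma jk_interval (a : ℂ) (ha : a.im ≠ 0) (R : ℝ) :
    ∫ x in (-R)..R, ((x : ℂ) - a)⁻¹ =
      Complex.log ((R : ℂ) - a) - Complex.log ((-R : ℂ) - a) := by
  have h := intervalIntegral.integral_eq_sub_of_hasDerivAt
    (f := fun x : ℝ => Complex.log ((x : ℂ) - a))
    (f' := fun x : ℝ => ((x : ℂ) - a)⁻¹) (a := -R) (b := R) ?_ ?_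
  · simpa using h
  · intro x _
    have hmem : (x : ℂ) - a ∈ Complex.slitPlane := by
      rw [Complex.mem_slitPlane_iff]
      right
      simp [ha]
    have h1 : HasDerivAt (fun z : ℂ => Complex.log (z - a)) (((x : ℂ) - a)⁻¹) (x : ℂ) := by
      simpa [Function.comp_def] using (Complex.hasDerivAt_log hmem).comp (x : ℂ)
        ((hasDerivAt_id ((x : ℂ))).sub_const a)
    exact h1.comp_ofReal
  · exact ((Complex.continuous_ofReal.sub continuous_const).inv₀
      (jk_ne a ha)).intervalIntegrable _ _

lemma jk_tendsto (a : ℂ) (ha : a.im ≠ 0) :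
    Tendsto (fun R : ℝ => Complex.log ((R : ℂ) - a) - Complex.log ((-R : ℂ) - a)) atTop
      (𝓝 ((Real.pi : ℂ) * Complex.I * jkS a)) := by
  have h0 : Tendsto (fun R : ℝ => a / (R : ℂ)) atTop (𝓝 0) := by
    have h1 : Tendsto (fun R : ℝ => ((R⁻¹ : ℝ) : ℂ)) atTop (𝓝 0) := by
      have := (Complex.continuous_ofReal.tendsto (0 : ℝ)).comp tendsto_inv_atTop_zero
      simpa [Function.comp_def] using this
    have := h1.const_mul a
    simpa [div_eq_mul_inv, Complex.ofReal_inv] using this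
  -- limit of log (1 - a/R)
  have T1 : Tendsto (fun R : ℝ => Complex.log (1 - a / (R : ℂ))) atTop (𝓝 0) := by
    have hc : ContinuousAt Complex.log 1 := continuousAt_clog (by
      rw [Complex.mem_slitPlane_iff]; left; norm_num)
    have ht : Tendsto (fun R : ℝ => 1 - a / (R : ℂ)) atTop (𝓝 1) := by
      simpa using (tendsto_const_nhds (x := (1 : ℂ))).sub h0
    simpa [Complex.log_one, Function.comp_def] using hc.tendsto.comp ht
  -- limit of log (-1 - a/R)
  have ht2 : Tendsto (fun R : ℝ => -1 - a / (R : ℂ)) atTop (𝓝 (-1)) := by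
    simpa using (tendsto_const_nhds (x := (-1 : ℂ))).sub h0
  have him : ∀ᶠ R : ℝ in atTop, (-1 - a / (R : ℂ)).im = -a.im / R := by
    filter_upwards [eventually_gt_atTop (0 : ℝ)] with R hR
    simp [Complex.div_im, Complex.normSq_apply]
    field_simp
  have T2 : Tendsto (fun R : ℝ => Complex.log (-1 - a / (R : ℂ))) atTop
      (𝓝 (-(Real.pi : ℂ) * Complex.I * jkS a)) := by
    rcases lt_or_gt_of_ne ha with hlt | hgt
    · -- a.im < 0 : im of -1 - a/R is positive
      have hmem : ∀ᶠ R : ℝ in atTop, (-1 - a / (R : ℂ)) ∈ {z : ℂ | 0 ≤ z.im} := by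
        filter_upwards [him, eventually_gt_atTop (0 : ℝ)] with R hR hR0
        show 0 ≤ (-1 - a / (R : ℂ)).im
        rw [hR]
        have h3 : 0 < -a.im := neg_pos.2 hlt
        positivity
      have := (Complex.tendsto_log_nhdsWithin_im_nonneg_of_re_neg_of_im_zero
        (z := (-1 : ℂ)) (by norm_num) (by norm_num)).comp
        (tendsto_nhdsWithin_iff.2 ⟨ht2, hmem⟩)
      have hval : Real.log (‖(-1 : ℂ)‖) + Real.pi * Complex.I =
          -(Real.pi : ℂ) * Complex.I * jkS a := by
        simp [jkS, not_lt.2 hlt.le, hlt.not_gt]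
      rw [hval] at this
      exact this
    · -- 0 < a.im : im of -1 - a/R is negative
      have hmem : ∀ᶠ R : ℝ in atTop, (-1 - a / (R : ℂ)) ∈ {z : ℂ | z.im < 0} := by
        filter_upwards [him, eventually_gt_atTop (0 : ℝ)] with R hR hR0
        show (-1 - a / (R : ℂ)).im < 0
        rw [hR, neg_div]
        have : 0 < a.im / R := by positivity
        linarith
      have := (Complex.tendsto_log_nhdsWithin_im_neg_of_re_neg_of_im_zero
        (z := (-1 : ℂ)) (by norm_num) (by norm_num)).comp
        (tendsto_nhdsWithin_iff.2 ⟨ht2, hmem⟩)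
      have hval : (Real.log (‖(-1 : ℂ)‖) : ℂ) - Real.pi * Complex.I =
          -(Real.pi : ℂ) * Complex.I * jkS a := by
        simp [jkS, hgt]
      rw [hval] at this
      exact this
  have heq : ∀ᶠ R : ℝ in atTop,
      Complex.log (1 - a / (R : ℂ)) - Complex.log (-1 - a / (R : ℂ)) =
      Complex.log ((R : ℂ) - a) - Complex.log ((-R : ℂ) - a) := by
    filter_upwards [eventually_gt_atTop (0 : ℝ)] with R hR0
    have hRne : ((R : ℂ)) ≠ 0 := by
      simpa using (ne_of_gt hR0)
    have hne1 : (1 : ℂ) - a / (R : ℂ) ≠ 0 := by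
      intro h
      apply ha
      field_simp at h
      rw [← sub_eq_zero.1 (by simpa using h : (R : ℂ) - a = 0)]
      simp
    have hne2 : (-1 : ℂ) - a / (R : ℂ) ≠ 0 := by
      intro h
      apply ha
      field_simp at h
      have h2 : a = -(R : ℂ) := by linear_combination -h
      rw [h2]
      simp
    have e1 : (R : ℂ) - a = (R : ℂ) * (1 - a / (R : ℂ)) := by
      field_simp
    have e2 : (-R : ℂ) - a = (R : ℂ) * (-1 - a / (R : ℂ)) := by
      field_simp
    rw [e1, e2, Complex.log_ofReal_mul hR0 hne1, Complex.log_ofReal_mul hR0 hne2]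
    ring
  have := T1.sub T2
  rw [show (0 : ℂ) - -(Real.pi : ℂ) * Complex.I * jkS a = (Real.pi : ℂ) * Complex.I * jkS a by ring] at this
  exact this.congr' heq



lemma jk_pair_integral (a b : ℂ) (ha : a.im ≠ 0) (hb : b.im ≠ 0) :
    ∫ x : ℝ, (((x : ℂ) - a)⁻¹ - ((x : ℂ) - b)⁻¹) =
      (Real.pi : ℂ) * Complex.I * (jkS a - jkS b) := by
  have hint := jk_integrable a b ha hb
  have h1 := MeasureTheory.intervalIntegral_tendsto_integral hint
    tendsto_neg_atTop_atBot tendsto_id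
  have h2 : ∀ R : ℝ, ∫ x in (-R)..R, (((x : ℂ) - a)⁻¹ - ((x : ℂ) - b)⁻¹) =
      (Complex.log ((R : ℂ) - a) - Complex.log ((-R : ℂ) - a)) -
      (Complex.log ((R : ℂ) - b) - Complex.log ((-R : ℂ) - b)) := by
    intro R
    rw [intervalIntegral.integral_sub (f := fun x : ℝ => ((x : ℂ) - a)⁻¹) (g := fun x : ℝ => ((x : ℂ) - b)⁻¹)
      (((Complex.continuous_ofReal.sub continuous_const).inv₀ (jk_ne a ha)).intervalIntegrable _ _)
      (((Complex.continuous_ofReal.sub continuous_const).inv₀ (jk_ne b hb)).intervalIntegrable _ _),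
      jk_interval a ha R, jk_interval b hb R]
  have h3 : Tendsto (fun R : ℝ => ∫ x in (-R)..R, (((x : ℂ) - a)⁻¹ - ((x : ℂ) - b)⁻¹)) atTop
      (𝓝 ((Real.pi : ℂ) * Complex.I * (jkS a - jkS b))) := by
    have := (jk_tendsto a ha).sub (jk_tendsto b hb)
    rw [show (Real.pi : ℂ) * Complex.I * jkS a - (Real.pi : ℂ) * Complex.I * jkS b =
      (Real.pi : ℂ) * Complex.I * (jkS a - jkS b) by ring] at this
    exact this.congr (fun R => (h2 R).symm)
  exact tendsto_nhds_unique h1 h3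

/-- For distinct `a_1, …, a_n ∈ ℂ` (`n ≥ 2`) with `Im a_j ≠ Y`, and a polynomial `p` with
`deg p ≤ n - 2`, the integral over `ℝ` of `x ↦ p(x+iY) / ∏_j (x+iY - a_j)` equals `-2πi`
times the sum of the residues at the poles below the line `Im z = Y`. -/
theorem jk_line_integral_lower (n : ℕ) (hn : 2 ≤ n) (a : Fin n → ℂ)
    (ha : Function.Injective a) (Y : ℝ) (haY : ∀ j, (a j).im ≠ Y)
    (p : Polynomial ℂ) (hp : p.natDegree ≤ n - 2) :
    ∫ x : ℝ, p.eval ((x : ℂ) + Complex.I * (Y : ℂ)) /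
        ∏ j, ((x : ℂ) + Complex.I * (Y : ℂ) - a j) =
      -((2 : ℂ) * (Real.pi : ℂ) * Complex.I) *
        ∑ j ∈ Finset.univ.filter (fun j => (a j).im < Y),
          p.eval (a j) / ∏ k ∈ Finset.univ.erase j, (a j - a k) := by
  classical
  set c : Fin n → ℂ := fun j => p.eval (a j) / ∏ k ∈ Finset.univ.erase j, (a j - a k) with hc
  set b : Fin n → ℂ := fun j => a j - Complex.I * (Y : ℂ) with hb
  have hbim : ∀ j, (b j).im ≠ 0 := by
    intro j
    simp only [hb, Complex.sub_im, Complex.mul_im, Complex.I_re, Complex.I_im,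
      Complex.ofReal_re, Complex.ofReal_im]
    simpa using sub_ne_zero.2 (haY j)
  have hsumc : ∑ j, c j = 0 := jk_sum_c_zero hn a ha p hp
  have j0 : Fin n := ⟨0, by omega⟩
  -- pointwise identity
  have hpt : ∀ x : ℝ, p.eval ((x : ℂ) + Complex.I * (Y : ℂ)) /
      ∏ j, ((x : ℂ) + Complex.I * (Y : ℂ) - a j) =
      ∑ j, c j * (((x : ℂ) - b j)⁻¹ - ((x : ℂ) - b j0)⁻¹) := by
    intro x
    have hz : ∀ j, (x : ℂ) + Complex.I * (Y : ℂ) ≠ a j := by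
      intro j h
      apply haY j
      have := congrArg Complex.im h
      simpa using this.symm
    rw [jk_eval_decomp a ha p (by omega) _ hz]
    have key : ∀ j, (x : ℂ) + Complex.I * (Y : ℂ) - a j = (x : ℂ) - b j := by
      intro j; simp only [hb]; ring
    calc ∑ j, c j / ((x : ℂ) + Complex.I * (Y : ℂ) - a j)
        = ∑ j, c j * ((x : ℂ) - b j)⁻¹ := by
          refine Finset.sum_congr rfl (fun j _ => ?_)
          rw [key j, div_eq_mul_inv]
      _ = ∑ j, c j * (((x : ℂ) - b j)⁻¹ - ((x : ℂ) - b j0)⁻¹) := by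
          rw [← sub_zero (∑ j, c j * ((x : ℂ) - b j)⁻¹)]
          rw [show (0 : ℂ) = (∑ j, c j) * ((x : ℂ) - b j0)⁻¹ by rw [hsumc, zero_mul]]
          rw [Finset.sum_mul, ← Finset.sum_sub_distrib]
          exact Finset.sum_congr rfl (fun j _ => by ring)
  -- integrate
  have hInt : ∀ j : Fin n, MeasureTheory.Integrable
      (fun x : ℝ => c j * (((x : ℂ) - b j)⁻¹ - ((x : ℂ) - b j0)⁻¹)) :=
    fun j => (jk_integrable (b j) (b j0) (hbim j) (hbim j0)).const_mul (c j)
  calc ∫ x : ℝ, p.eval ((x : ℂ) + Complex.I * (Y : ℂ)) /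
        ∏ j, ((x : ℂ) + Complex.I * (Y : ℂ) - a j)
      = ∫ x : ℝ, ∑ j, c j * (((x : ℂ) - b j)⁻¹ - ((x : ℂ) - b j0)⁻¹) := by
        exact congrArg _ (funext hpt)
    _ = ∑ j, ∫ x : ℝ, c j * (((x : ℂ) - b j)⁻¹ - ((x : ℂ) - b j0)⁻¹) :=
        MeasureTheory.integral_finset_sum _ (fun j _ => hInt j)
    _ = ∑ j, c j * ((Real.pi : ℂ) * Complex.I * (jkS (b j) - jkS (b j0))) := by
        refine Finset.sum_congr rfl (fun j _ => ?_)
        rw [MeasureTheory.integral_const_mul, jk_pair_integral (b j) (b j0) (hbim j) (hbim j0)]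
    _ = (Real.pi : ℂ) * Complex.I * (∑ j, c j * jkS (b j)) -
        (Real.pi : ℂ) * Complex.I * jkS (b j0) * (∑ j, c j) := by
        rw [Finset.mul_sum, Finset.mul_sum, ← Finset.sum_sub_distrib]
        exact Finset.sum_congr rfl (fun j _ => by ring)
    _ = (Real.pi : ℂ) * Complex.I * (∑ j, c j * jkS (b j)) := by
        rw [hsumc, mul_zero, sub_zero]
    _ = -((2 : ℂ) * (Real.pi : ℂ) * Complex.I) *
        ∑ j ∈ Finset.univ.filter (fun j => (a j).im < Y), c j := by
      have hS : ∀ j, jkS (b j) = if (a j).im < Y then -1 else 1 := by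
        intro j
        have : (b j).im = (a j).im - Y := by
          simp [hb, Complex.sub_im, Complex.mul_im]
        rw [jkS, this]
        rcases lt_or_gt_of_ne (haY j) with h | h
        · rw [if_neg (show ¬(0:ℝ) < (a j).im - Y by linarith), if_pos h]
        · rw [if_pos (show (0:ℝ) < (a j).im - Y by linarith),
            if_neg (show ¬(a j).im < Y by linarith)]
      have hsplit := Finset.sum_filter_add_sum_filter_not Finset.univ
        (fun j => (a j).im < Y) c
      rw [hsumc] at hsplit
      have h1 : ∑ j, c j * jkS (b j) =
          -2 * ∑ j ∈ Finset.univ.filter (fun j => (a j).im < Y), c j := by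
        rw [← Finset.sum_filter_add_sum_filter_not Finset.univ (fun j => (a j).im < Y)
          (fun j => c j * jkS (b j))]
        have e1 : ∑ j ∈ Finset.univ.filter (fun j => (a j).im < Y), c j * jkS (b j) =
            -∑ j ∈ Finset.univ.filter (fun j => (a j).im < Y), c j := by
          rw [← Finset.sum_neg_distrib]
          refine Finset.sum_congr rfl (fun j hj => ?_)
          rw [hS j, if_pos (Finset.mem_filter.1 hj).2]
          ring
        have e2 : ∑ j ∈ Finset.univ.filter (fun j => ¬(a j).im < Y), c j * jkS (b j) =
            ∑ j ∈ Finset.univ.filter (fun j => ¬(a j).im < Y), c j := by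
          refine Finset.sum_congr rfl (fun j hj => ?_)
          rw [hS j, if_neg (Finset.mem_filter.1 hj).2]
          ring
        rw [e1, e2]
        have e3 : ∑ j ∈ Finset.univ.filter (fun j => ¬(a j).im < Y), c j =
            -∑ j ∈ Finset.univ.filter (fun j => (a j).im < Y), c j := by
          linear_combination hsplit
        rw [e3]
        ring
      rw [h1]
      ring
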